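/- arXiv:1912.08774 — 2 statements merged into one kernel-verified Lean document; each statement's English description precedes it below -/
import Mathlib

section
/- Let g : R^d → R be continuously differentiable and strongly convex, let h : R^d → R^d be a continuously differentiable bijection with continuously differentiable inverse, and define f = g ∘ h⁻¹. Then for any compact set G ⊆ R^d there exists μ_G > 0 such that μ_G (f(z) − f*) ≤ ‖∇f(z)‖² for all z ∈ G, where f* = inf f = inf g. -/
open RealInnerProductSpace

lemma inner_gradient_eq {d : ℕ} (f : EuclideanSpace ℝ (Fin d) → ℝ)
    (x v : EuclideanSpace ℝ (Fin d)) : ⟪gradient f x, v⟫ = fderiv ℝ f x v := by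
  simp [gradient, InnerProductSpace.toDual_symm_apply]

lemma strong_convex_ineq {d : ℕ} (g : EuclideanSpace ℝ (Fin d) → ℝ) (μ : ℝ)
    (hsc : ConvexOn ℝ Set.univ (fun q => g q - μ / 2 * ‖q‖ ^ 2))
    (hg : ContDiff ℝ 1 g) (x y : EuclideanSpace ℝ (Fin d)) :
    g x + ⟪gradient g x, y - x⟫ + μ / 2 * ‖y - x‖ ^ 2 ≤ g y := by
  set φ : EuclideanSpace ℝ (Fin d) → ℝ := fun q => g q - μ / 2 * ‖q‖ ^ 2 with hφ
  set c : ℝ → EuclideanSpace ℝ (Fin d) := fun t => t • (y - x) + x with hc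
  have hc0 : c 0 = x := by simp [hc]
  have hc1 : c 1 = y := by simp [hc]
  have hcd : HasDerivAt c (y - x) 0 := by
    simpa [hc] using ((hasDerivAt_id (0:ℝ)).smul_const (y - x)).add_const x
  have hψconv : ConvexOn ℝ Set.univ (φ ∘ c) := by
    have := hsc.comp_affineMap (AffineMap.lineMap x y)
    have heq : (φ ∘ c) = φ ∘ (AffineMap.lineMap x y) := by
      funext t
      simp [hc, AffineMap.lineMap_apply, Function.comp]
    rw [heq]
    simpa using this
  have hdx : HasFDerivAt g (fderiv ℝ g x) (c 0) := hc0 ▸ (hg.differentiable one_ne_zero x).hasFDerivAt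
  have hgd : HasDerivAt (fun t => g (c t)) (fderiv ℝ g x (y - x)) 0 :=
    hdx.comp_hasDerivAt 0 hcd
  have hnd : HasDerivAt (fun t => ‖c t‖ ^ 2) (2 * ⟪x, y - x⟫) 0 := by
    have := hcd.norm_sq
    rwa [hc0] at this
  have hψd : HasDerivAt (φ ∘ c)
      (fderiv ℝ g x (y - x) - μ / 2 * (2 * ⟪x, y - x⟫)) 0 :=
    hgd.sub (hnd.const_mul (μ / 2))
  have hslope := hψconv.le_slope_of_hasDerivAt (Set.mem_univ (0:ℝ)) (Set.mem_univ 1)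
      one_pos hψd
  rw [slope_def_field] at hslope
  simp only [Function.comp, hc0, hc1] at hslope
  have hval : (φ (c 1) - φ (c 0)) / (1 - 0) = (g y - μ / 2 * ‖y‖ ^ 2) - (g x - μ / 2 * ‖x‖ ^ 2) := by
    rw [hc0, hc1]; simp [hφ]
  have hexp : ‖y - x‖ ^ 2 = ‖y‖ ^ 2 - 2 * ⟪x, y - x⟫ - ‖x‖ ^ 2 := by
    have hns := @norm_sub_sq_real (EuclideanSpace ℝ (Fin d)) _ _ y x
    have h2 : ⟪x, y - x⟫ = ⟪x, y⟫ - ‖x‖^2 := by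
      rw [inner_sub_right, real_inner_self_eq_norm_sq]
    rw [h2, hns, real_inner_comm]
    ring
  rw [inner_gradient_eq, hexp]
  have hslope' : (fderiv ℝ g x) (y - x) - μ / 2 * (2 * ⟪x, y - x⟫)
      ≤ (g y - μ / 2 * ‖y‖ ^ 2) - (g x - μ / 2 * ‖x‖ ^ 2) := by
    calc _ ≤ (φ (c 1) - φ (c 0)) / (1 - 0) := by rw [hc0, hc1]; exact hslope
      _ = _ := hval
  nlinarith [hslope']

lemma pl_ineq {d : ℕ} (g : EuclideanSpace ℝ (Fin d) → ℝ) (μ : ℝ) (hμ : 0 < μ)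
    (hsc : ConvexOn ℝ Set.univ (fun q => g q - μ / 2 * ‖q‖ ^ 2))
    (hg : ContDiff ℝ 1 g) (qstar : EuclideanSpace ℝ (Fin d))
    (x : EuclideanSpace ℝ (Fin d)) :
    2 * μ * (g x - g qstar) ≤ ‖gradient g x‖ ^ 2 := by
  have h := strong_convex_ineq g μ hsc hg x qstar
  have hip : ⟪gradient g x, qstar - x⟫ ≥ -(‖gradient g x‖ * ‖qstar - x‖) := by
    have := abs_real_inner_le_norm (gradient g x) (qstar - x)
    have := abs_le.mp this
    linarith [this.1]
  set a := ‖gradient g x‖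
  set t := ‖qstar - x‖
  nlinarith [sq_nonneg (a - μ * t), sq_nonneg a, sq_nonneg t]

/-- Local gradient dominance for `f = g ∘ h⁻¹` on compact sets: if `g` is
continuously differentiable and strongly convex, `h` is a continuously
differentiable bijection with continuously differentiable inverse `hinv`, and
`f = g ∘ hinv`, then on every compact set `G` there is `μ_G > 0` with
`μ_G (f z − f*) ≤ ‖∇f z‖²`, where `f*` is the minimum value of `g` (equal to
the infimum of `f`). -/
theorem stmt_3 {d : ℕ}
    (g : EuclideanSpace ℝ (Fin d) → ℝ)
    (h hinv : EuclideanSpace ℝ (Fin d) → EuclideanSpace ℝ (Fin d))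
    (μ : ℝ) (hμ : 0 < μ)
    (hsc : ConvexOn ℝ Set.univ (fun q => g q - μ / 2 * ‖q‖ ^ 2))
    (hg : ContDiff ℝ 1 g)
    (hh : ContDiff ℝ 1 h) (hhinv : ContDiff ℝ 1 hinv)
    (hli : Function.LeftInverse hinv h) (hri : Function.RightInverse hinv h)
    (f : EuclideanSpace ℝ (Fin d) → ℝ) (hf : f = g ∘ hinv)
    (qstar : EuclideanSpace ℝ (Fin d)) (hmin : ∀ q, g qstar ≤ g q)
    (G : Set (EuclideanSpace ℝ (Fin d))) (hG : IsCompact G) :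
    ∃ μG > 0, ∀ z ∈ G, μG * (f z - g qstar) ≤ ‖gradient f z‖ ^ 2 := by
  -- f is differentiable
  have hfC : ContDiff ℝ 1 f := by rw [hf]; exact hg.comp hhinv
  have hfd : Differentiable ℝ f := hfC.differentiable one_ne_zero
  -- g = f ∘ h
  have hgfh : g = f ∘ h := by
    funext q; simp [hf, Function.comp, hli q]
  -- chain rule bound: ‖∇g q‖ ≤ ‖fderiv h q‖ * ‖∇f (h q)‖
  have hchain : ∀ q, ‖gradient g q‖ ≤ ‖fderiv ℝ h q‖ * ‖gradient f (h q)‖ := by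
    intro q
    have hcomp : fderiv ℝ g q = (fderiv ℝ f (h q)).comp (fderiv ℝ h q) := by
      rw [hgfh]
      exact fderiv_comp q (hfd (h q)) (hh.differentiable one_ne_zero q)
    have hinner : ∀ v : EuclideanSpace ℝ (Fin d),
        ⟪gradient g q, v⟫ = ⟪gradient f (h q), fderiv ℝ h q v⟫ := by
      intro v
      rw [inner_gradient_eq, inner_gradient_eq, hcomp]
      rfl
    rcases eq_or_ne (gradient g q) 0 with h0 | h0
    · rw [h0, norm_zero]
      positivity
    · have hpos : 0 < ‖gradient g q‖ := norm_pos_iff.mpr h0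
      have : ‖gradient g q‖ ^ 2 ≤ (‖fderiv ℝ h q‖ * ‖gradient f (h q)‖) * ‖gradient g q‖ := by
        have h1 : ‖gradient g q‖ ^ 2 = ⟪gradient g q, gradient g q⟫ :=
          (real_inner_self_eq_norm_sq _).symm
        rw [h1, hinner]
        calc ⟪gradient f (h q), fderiv ℝ h q (gradient g q)⟫
            ≤ ‖gradient f (h q)‖ * ‖fderiv ℝ h q (gradient g q)‖ :=
              real_inner_le_norm _ _
          _ ≤ ‖gradient f (h q)‖ * (‖fderiv ℝ h q‖ * ‖gradient g q‖) := by
              apply mul_le_mul_of_nonneg_left ((fderiv ℝ h q).le_opNorm _) (norm_nonneg _)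
          _ = (‖fderiv ℝ h q‖ * ‖gradient f (h q)‖) * ‖gradient g q‖ := by ring
      rw [sq] at this
      exact le_of_mul_le_mul_right this hpos
  -- bound the operator norm of fderiv h on the compact set hinv '' G
  have hK : IsCompact (hinv '' G) := hG.image (hhinv.continuous)
  have hcont : ContinuousOn (fun q => fderiv ℝ h q) (hinv '' G) :=
    (hh.continuous_fderiv one_ne_zero).continuousOn
  obtain ⟨C, hC⟩ := hK.exists_bound_of_continuousOn hcont
  set C' := max C 1 with hC'def
  have hC1 : (1:ℝ) ≤ C' := le_max_right _ _
  have hC'pos : (0:ℝ) < C' := lt_of_lt_of_le one_pos hC1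
  refine ⟨2 * μ / C' ^ 2, by positivity, ?_⟩
  intro z hz
  have hq : hinv z ∈ hinv '' G := ⟨z, hz, rfl⟩
  have hb : ‖fderiv ℝ h (hinv z)‖ ≤ C' := (hC _ hq).trans (le_max_left _ _)
  have hfz : f z = g (hinv z) := by rw [hf]; rfl
  have hpl := pl_ineq g μ hμ hsc hg qstar (hinv z)
  have hch := hchain (hinv z)
  rw [hri z] at hch
  have hgf : ‖gradient g (hinv z)‖ ≤ C' * ‖gradient f z‖ :=
    hch.trans (mul_le_mul_of_nonneg_right hb (norm_nonneg _))
  have h2 : ‖gradient g (hinv z)‖ ^ 2 ≤ C' ^ 2 * ‖gradient f z‖ ^ 2 := by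
    nlinarith [norm_nonneg (gradient g (hinv z)), norm_nonneg (gradient f z)]
  rw [hfz, div_mul_eq_mul_div, div_le_iff₀ (by positivity)]
  linarith
end

section
/- For f(a,b,c) = (b + c + ac)² + (b + ac)² + 2a² + 2c², the inequality (10 − 2√5)·f(z) ≤ ‖J(z)‖_F² · ‖∇f(z)‖² holds for all z = (a,b,c) ∈ R³, where J(z) is the 3×3 matrix [[1,0,0],[−c,1,−a],[0,0,1]] with ‖J(z)‖_F² = 3 + a² + c². -/
private lemma stepB' (a c da db dc : ℝ) :
    (da - c*db)^2 + db^2 + (dc - a*db)^2 ≤ (3 + a^2 + c^2) * (da^2 + db^2 + dc^2) := by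
  nlinarith [sq_nonneg (c*da + db), sq_nonneg (a*dc + db), sq_nonneg da, sq_nonneg dc,
    mul_nonneg (sq_nonneg a) (sq_nonneg da), mul_nonneg (sq_nonneg c) (sq_nonneg dc)]

private lemma stepA' (a b c : ℝ) :
    (10 - 2 * Real.sqrt 5) * ((b + c + a*c)^2 + (b + a*c)^2 + 2*a^2 + 2*c^2)
      ≤ (4*a)^2 + (2*(b + c + a*c) + 2*(b + a*c))^2 + (2*(b + c + a*c) + 4*c)^2 := by
  set s : ℝ := Real.sqrt 5 with hs
  have hs2 : s ^ 2 = 5 := Real.sq_sqrt (by norm_num)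
  have hspos : (0:ℝ) < s := Real.sqrt_pos.2 (by norm_num)
  have hs1 : (1:ℝ) ≤ s := by nlinarith
  have hs3 : s ^ 3 = 5 * s := by nlinarith
  have key := mul_nonneg hspos.le (sq_nonneg (4*s*(b + a*c) + (10 + 2*s)*c))
  nlinarith [key, mul_nonneg (by nlinarith : (0:ℝ) ≤ 4*s - 4) (sq_nonneg a), hs2, hs3]

private lemma key_ineq (a b c : ℝ) :
    (10 - 2 * Real.sqrt 5) * ((b + c + a * c) ^ 2 + (b + a * c) ^ 2
        + 2 * a ^ 2 + 2 * c ^ 2)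
      ≤ (3 + a ^ 2 + c ^ 2) *
        ((2*(b + c + a*c)*c + 2*(b + a*c)*c + 4*a) ^ 2
          + (2*(b + c + a*c) + 2*(b + a*c)) ^ 2
          + (2*(b + c + a*c)*(1 + a) + 2*(b + a*c)*a + 4*c) ^ 2) := by
  set da : ℝ := 2*(b + c + a*c)*c + 2*(b + a*c)*c + 4*a with hda
  set db : ℝ := 2*(b + c + a*c) + 2*(b + a*c) with hdb
  set dc : ℝ := 2*(b + c + a*c)*(1 + a) + 2*(b + a*c)*a + 4*c with hdc
  calc (10 - 2 * Real.sqrt 5) * ((b + c + a * c) ^ 2 + (b + a * c) ^ 2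
        + 2 * a ^ 2 + 2 * c ^ 2)
      ≤ (4*a)^2 + (2*(b + c + a*c) + 2*(b + a*c))^2 + (2*(b + c + a*c) + 4*c)^2 :=
        stepA' a b c
    _ = (da - c*db)^2 + db^2 + (dc - a*db)^2 := by rw [hda, hdb, hdc]; ring
    _ ≤ (3 + a ^ 2 + c ^ 2) * (da^2 + db^2 + dc^2) := stepB' a c da db dc

/-- Local gradient dominance inequality for
`f(a,b,c) = (b+c+ac)² + (b+ac)² + 2a² + 2c²`:
`(10 − 2√5) f(z) ≤ (3 + a² + c²) ‖∇f(z)‖²` for every `z = (a,b,c)`, where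
`3 + a² + c²` is the squared Frobenius norm of the Jacobian
`[[1,0,0],[−c,1,−a],[0,0,1]]`. -/
theorem stmt_10
    (f : EuclideanSpace ℝ (Fin 3) → ℝ)
    (hf : ∀ z, f z = (z 1 + z 2 + z 0 * z 2) ^ 2 + (z 1 + z 0 * z 2) ^ 2
      + 2 * (z 0) ^ 2 + 2 * (z 2) ^ 2)
    (J : EuclideanSpace ℝ (Fin 3) → Matrix (Fin 3) (Fin 3) ℝ)
    (hJ : ∀ z, J z = !![1, 0, 0; -(z 2), 1, -(z 0); 0, 0, 1]) :
    ∀ z : EuclideanSpace ℝ (Fin 3),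
      (∑ i, ∑ j, (J z i j) ^ 2) = 3 + (z 0) ^ 2 + (z 2) ^ 2 ∧
      (10 - 2 * Real.sqrt 5) * f z
        ≤ (3 + (z 0) ^ 2 + (z 2) ^ 2) * ‖gradient f z‖ ^ 2 := by
  intro z
  constructor
  · rw [hJ z]
    simp [Fin.sum_univ_three]
    ring
  · set a := z 0 with ha
    set b := z 1 with hb
    set c := z 2 with hc
    set g : EuclideanSpace ℝ (Fin 3) := (WithLp.equiv 2 (Fin 3 → ℝ)).symm
      ![2*(b + c + a*c)*c + 2*(b + a*c)*c + 4*a,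
        2*(b + c + a*c) + 2*(b + a*c),
        2*(b + c + a*c)*(1 + a) + 2*(b + a*c)*a + 4*c] with hg
    have hfe : f = fun z : EuclideanSpace ℝ (Fin 3) =>
        ((z 1 + z 2 + z 0 * z 2) * (z 1 + z 2 + z 0 * z 2)
          + (z 1 + z 0 * z 2) * (z 1 + z 0 * z 2))
          + (2 * (z 0 * z 0) + 2 * (z 2 * z 2)) := by
      funext w; rw [hf w]; ring
    have h0 : HasFDerivAt (fun z : EuclideanSpace ℝ (Fin 3) => z 0)
        (EuclideanSpace.proj (0 : Fin 3) : EuclideanSpace ℝ (Fin 3) →L[ℝ] ℝ) z := by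
      simpa using (EuclideanSpace.proj (0 : Fin 3) :
        EuclideanSpace ℝ (Fin 3) →L[ℝ] ℝ).hasFDerivAt (x := z)
    have h1 : HasFDerivAt (fun z : EuclideanSpace ℝ (Fin 3) => z 1)
        (EuclideanSpace.proj (1 : Fin 3) : EuclideanSpace ℝ (Fin 3) →L[ℝ] ℝ) z := by
      simpa using (EuclideanSpace.proj (1 : Fin 3) :
        EuclideanSpace ℝ (Fin 3) →L[ℝ] ℝ).hasFDerivAt (x := z)
    have h2 : HasFDerivAt (fun z : EuclideanSpace ℝ (Fin 3) => z 2)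
        (EuclideanSpace.proj (2 : Fin 3) : EuclideanSpace ℝ (Fin 3) →L[ℝ] ℝ) z := by
      simpa using (EuclideanSpace.proj (2 : Fin 3) :
        EuclideanSpace ℝ (Fin 3) →L[ℝ] ℝ).hasFDerivAt (x := z)
    have e1 := (h1.add h2).add (h0.mul h2)
    have e2 := h1.add (h0.mul h2)
    have hd := ((e1.mul e1).add (e2.mul e2)).add
      (((h0.mul h0).const_mul (2:ℝ)).add ((h2.mul h2).const_mul (2:ℝ)))
    replace hd := hd.congr_of_eventuallyEq (f₁ := f) (Filter.Eventually.of_forall fun w => by rw [hfe]; rfl)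
    have hgrad : HasGradientAt f g z := by
      rw [hasGradientAt_iff_hasFDerivAt]
      refine hd.congr_fderiv ?_
      ext v
      simp [InnerProductSpace.toDual_apply_apply, PiLp.inner_apply, Fin.sum_univ_three, hg,
        ← ha, ← hb, ← hc]
      ring
    rw [hgrad.gradient]
    have hnorm : ‖g‖ ^ 2 = (2*(b + c + a*c)*c + 2*(b + a*c)*c + 4*a) ^ 2
        + (2*(b + c + a*c) + 2*(b + a*c)) ^ 2
        + (2*(b + c + a*c)*(1 + a) + 2*(b + a*c)*a + 4*c) ^ 2 := by
      rw [EuclideanSpace.real_norm_sq_eq]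
      simp [PiLp.inner_apply, Fin.sum_univ_three, hg]
    rw [hnorm, hf z, ← ha, ← hb, ← hc]
    exact key_ineq a b c
end
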